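/- Every (k,ε)-quantum spectral extractor with input size n, output size m, and seed size d necessarily has d ≥ min{n−k, m} + log(1/ε) − O(1) (constant at most 2, using the general d ≥ log(1/ε) bound in the edge case k ≥ n−1). -/

import Mathlib

/-!
Feed the extractor the flat source `X = U₁† (|s⟩⟨s| ⊗ 1_J) U₁`. Under seed `1` the output
register is exactly `|J| |s⟩⟨s|`, of squared Hilbert–Schmidt norm `|J|²`; under every other seed
it still has trace `|J|`, so by Cauchy–Schwarz its squared norm is at least `|J|² / |M|`.
Hence `‖ψ(X)‖² - ‖τ(X)‖² ≥ |J|² (|M| - 1) / (|M| |D|²)`, while `‖X‖² = |J|`, and the spectral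
bound yields `|J| (|M| - 1) ≤ 2^k ε |D|`. As `|M| ≥ 2`, taking logarithms gives
`d ≥ n - k + log(1/ε) - 1`.
-/

open Matrix Finset

/-- Squared Hilbert–Schmidt norm. -/
noncomputable def hsNormSq {n : Type} [Fintype n] (A : Matrix n n ℂ) : ℝ :=
  ((Aᴴ * A).trace).re

section HilbertSchmidt

variable {n : Type} [Fintype n]

theorem hsNormSq_eq_sum (A : Matrix n n ℂ) :
    hsNormSq A = ∑ p, ∑ q, Complex.normSq (A q p) := by
  simp only [hsNormSq, trace, diag_apply, mul_apply, conjTranspose_apply, Complex.re_sum,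
    Complex.mul_re, Complex.star_def, Complex.conj_re, Complex.conj_im, Complex.normSq_apply]
  ring_nf

theorem normSq_apply_le_hsNormSq (A : Matrix n n ℂ) (p q : n) :
    Complex.normSq (A p q) ≤ hsNormSq A := by
  rw [hsNormSq_eq_sum]
  exact (single_le_sum (f := fun q' => Complex.normSq (A q' q))
    (fun _ _ => Complex.normSq_nonneg _) (mem_univ p)).trans
    (single_le_sum (f := fun q => ∑ q', Complex.normSq (A q' q))
      (fun _ _ => sum_nonneg fun _ _ => Complex.normSq_nonneg _) (mem_univ q))

theorem hsNormSq_smul (c : ℂ) (A : Matrix n n ℂ) :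
    hsNormSq (c • A) = Complex.normSq c * hsNormSq A := by
  simp only [hsNormSq_eq_sum, Matrix.smul_apply, smul_eq_mul, Complex.normSq_mul, mul_sum]

theorem hsNormSq_diagonal [DecidableEq n] (d : n → ℂ) :
    hsNormSq (diagonal d) = ∑ p, Complex.normSq (d p) := by
  simp [hsNormSq_eq_sum, diagonal_apply, apply_ite Complex.normSq]

theorem hsNormSq_unitary_conj [DecidableEq n] {U : Matrix n n ℂ} (hU : U ∈ unitaryGroup n ℂ)
    (A : Matrix n n ℂ) : hsNormSq (Uᴴ * A * U) = hsNormSq A := by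
  have hUU : U * Uᴴ = 1 := Unitary.mul_star_self_of_mem hU
  rw [hsNormSq, hsNormSq, conjTranspose_mul, conjTranspose_mul, conjTranspose_conjTranspose]
  congr 1
  calc ((Uᴴ * (Aᴴ * U)) * (Uᴴ * A * U)).trace = (Uᴴ * (Aᴴ * (U * Uᴴ) * A) * U).trace := by
        simp only [Matrix.mul_assoc]
    _ = (Aᴴ * A).trace := by rw [hUU, Matrix.mul_one, trace_mul_cycle, hUU, Matrix.one_mul]

theorem normSq_trace_le_card_mul_hsNormSq (A : Matrix n n ℂ) :
    Complex.normSq A.trace ≤ Fintype.card n * hsNormSq A := by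
  have hdiag : ∑ p, ‖A p p‖ ^ 2 ≤ hsNormSq A := by
    rw [hsNormSq_eq_sum]
    exact sum_le_sum fun p _ => by
      rw [Complex.sq_norm]
      exact single_le_sum (f := fun q => Complex.normSq (A q p))
        (fun _ _ => Complex.normSq_nonneg _) (mem_univ p)
  calc Complex.normSq A.trace = ‖∑ p, A p p‖ ^ 2 := by rw [Complex.sq_norm, trace]; rfl
    _ ≤ (∑ p, ‖A p p‖) ^ 2 := by gcongr; exact norm_sum_le _ _
    _ ≤ Fintype.card n * ∑ p, ‖A p p‖ ^ 2 := by
        simpa using sq_sum_le_card_mul_sum_sq (s := univ) (f := fun p => ‖A p p‖)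
    _ ≤ Fintype.card n * hsNormSq A := by gcongr

theorem hsNormSq_blockDiagonal {o : Type} [Fintype o] [DecidableEq o] (B : o → Matrix n n ℂ) :
    hsNormSq (blockDiagonal B) = ∑ i, hsNormSq (B i) := by
  simp only [hsNormSq_eq_sum, Fintype.sum_prod_type, blockDiagonal_apply',
    apply_ite Complex.normSq, Complex.normSq_zero, sum_ite_eq', mem_univ, if_true]
  rw [sum_comm]

end HilbertSchmidt

theorem trace_mul_mul_of_mul_eq_one {m n R : Type} [Fintype m] [Fintype n] [DecidableEq n]
    [CommSemiring R] {U : Matrix m n R} {V : Matrix n m R} (h : V * U = 1) (A : Matrix n n R) :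
    (U * A * V).trace = A.trace := by
  rw [trace_mul_cycle, h, Matrix.one_mul]

section PartialTrace

variable {M J : Type} [Fintype J]

def partialTraceRight {R : Type} [AddCommMonoid R] (A : Matrix (M × J) (M × J) R) :
    Matrix M M R :=
  of fun m m' => ∑ t, A (m, t) (m', t)

theorem trace_partialTraceRight [Fintype M] {R : Type} [AddCommMonoid R]
    (A : Matrix (M × J) (M × J) R) : (partialTraceRight A).trace = A.trace := by
  simp [trace, partialTraceRight, Fintype.sum_prod_type]

variable [DecidableEq M] [DecidableEq J]

/-- `|s⟩⟨s| ⊗ 1_J`: the flat source of the paper with `S = {s}`, up to normalisation. -/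
def flatProjector (s : M) : Matrix (M × J) (M × J) ℂ :=
  diagonal fun p => if p.1 = s then 1 else 0

theorem trace_flatProjector [Fintype M] (s : M) :
    (flatProjector (J := J) s).trace = Fintype.card J := by
  rw [flatProjector, trace_diagonal, Fintype.sum_prod_type,
    Fintype.sum_eq_single s fun m hm => by simp [hm]]
  simp

theorem hsNormSq_flatProjector [Fintype M] (s : M) :
    hsNormSq (flatProjector (J := J) s) = Fintype.card J := by
  simp only [flatProjector, hsNormSq_diagonal, Fintype.sum_prod_type]
  simp [apply_ite Complex.normSq]

theorem partialTraceRight_flatProjector_apply_self (s : M) :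
    partialTraceRight (flatProjector (J := J) s) s s = Fintype.card J := by
  simp [partialTraceRight, flatProjector]

end PartialTrace

theorem add_card_sub_one_mul_le_sum {ι : Type} [Fintype ι] {f : ι → ℝ} {a b : ℝ} {i₀ : ι}
    (ha : ∀ i, a ≤ f i) (hb : b ≤ f i₀) : b + (Fintype.card ι - 1) * a ≤ ∑ i, f i := by
  classical
  rw [← add_sum_erase _ _ (mem_univ i₀)]
  have hrest := card_nsmul_le_sum (univ.erase i₀) f a fun i _ => ha i
  rw [card_erase_of_mem (mem_univ i₀), card_univ, nsmul_eq_mul,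
    Nat.cast_sub (Fintype.card_pos_iff.mpr ⟨i₀⟩), Nat.cast_one] at hrest
  linarith

section Extractor

variable {M J D : Type} [Fintype M] [Fintype J] [Fintype D] [DecidableEq D]

/-- The paper's `ψ(X)`. -/
noncomputable def extractorOutput (U : D → Matrix (M × J) (M × J) ℂ)
    (X : Matrix (M × J) (M × J) ℂ) : Matrix (M × D) (M × D) ℂ :=
  blockDiagonal fun i => (Fintype.card D : ℂ)⁻¹ • partialTraceRight (U i * X * (U i)ᴴ)

variable (D) in
/-- The paper's `τ(X)`. -/
noncomputable def uniformOutput [DecidableEq M] (X : Matrix (M × J) (M × J) ℂ) :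
    Matrix (M × D) (M × D) ℂ :=
  diagonal fun _ => X.trace / (Fintype.card M * Fintype.card D)

theorem hsNormSq_uniformOutput [DecidableEq M] (X : Matrix (M × J) (M × J) ℂ) :
    hsNormSq (uniformOutput D X) = Complex.normSq X.trace / (Fintype.card M * Fintype.card D) := by
  set c : ℝ := Fintype.card M * Fintype.card D
  have hnormSq : Complex.normSq (Fintype.card M * Fintype.card D : ℂ) = c ^ 2 := by
    rw [← Nat.cast_mul, Complex.normSq_natCast]; push_cast; ring
  rw [uniformOutput, hsNormSq_diagonal, sum_const, card_univ, Fintype.card_prod, nsmul_eq_mul,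
    Complex.normSq_div, hnormSq]
  push_cast
  rcases eq_or_ne c 0 with hc | hc
  · simp [hc]
  · field_simp
    ring

theorem hsNormSq_extractorOutput_conj_flatProjector_ge [DecidableEq M] [DecidableEq J]
    {U : D → Matrix (M × J) (M × J) ℂ} (hU : ∀ i, U i ∈ unitaryGroup (M × J) ℂ) (i₀ : D) (s : M) :
    ((Fintype.card J : ℝ) ^ 2 + (Fintype.card D - 1) * (Fintype.card J ^ 2 / Fintype.card M))
        / Fintype.card D ^ 2 ≤
      hsNormSq (extractorOutput U ((U i₀)ᴴ * flatProjector s * U i₀)) := by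
  set X := (U i₀)ᴴ * flatProjector (J := J) s * U i₀
  have hUU : ∀ i, U i * (U i)ᴴ = 1 := fun i => Unitary.mul_star_self_of_mem (hU i)
  have hUU' : ∀ i, (U i)ᴴ * U i = 1 := fun i => Unitary.star_mul_self_of_mem (hU i)
  have hM : (0 : ℝ) < Fintype.card M := Nat.cast_pos.mpr (Fintype.card_pos_iff.mpr ⟨s⟩)
  have hblock : ∀ i, (Fintype.card J : ℝ) ^ 2 / Fintype.card M ≤
      hsNormSq (partialTraceRight (U i * X * (U i)ᴴ)) := fun i => by
    have htrace : (partialTraceRight (U i * X * (U i)ᴴ)).trace = Fintype.card J := by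
      rw [trace_partialTraceRight, trace_mul_mul_of_mul_eq_one (hUU' i),
        trace_mul_mul_of_mul_eq_one (hUU i₀), trace_flatProjector]
    have := normSq_trace_le_card_mul_hsNormSq (partialTraceRight (U i * X * (U i)ᴴ))
    rw [htrace, Complex.normSq_natCast] at this
    rwa [div_le_iff₀ hM, sq, mul_comm _ (Fintype.card M : ℝ)]
  have hblock₀ : (Fintype.card J : ℝ) ^ 2 ≤ hsNormSq (partialTraceRight (U i₀ * X * (U i₀)ᴴ)) := by
    have hUX : U i₀ * X * (U i₀)ᴴ = flatProjector s := by
      simp only [X, ← Matrix.mul_assoc, hUU, Matrix.one_mul]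
      rw [Matrix.mul_assoc, hUU, Matrix.mul_one]
    have := normSq_apply_le_hsNormSq (partialTraceRight (flatProjector (J := J) s)) s s
    rw [hUX]
    rwa [partialTraceRight_flatProjector_apply_self, Complex.normSq_natCast, ← sq] at this
  rw [extractorOutput, hsNormSq_blockDiagonal]
  simp only [hsNormSq_smul, ← mul_sum, Complex.normSq_inv, Complex.normSq_natCast]
  rw [div_eq_inv_mul, ← sq]
  gcongr
  exact add_card_sub_one_mul_le_sum hblock hblock₀

end Extractor

theorem card_mul_card_sub_one_le_of_spectral_bound {M J D : Type} [Fintype M] [DecidableEq M]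
    [Fintype J] [DecidableEq J] [Fintype D] [DecidableEq D] [Nonempty M] [Nonempty J] [Nonempty D]
    {U : D → Matrix (M × J) (M × J) ℂ} (hU : ∀ i, U i ∈ unitaryGroup (M × J) ℂ) {c : ℝ}
    (hspec : ∀ X : Matrix (M × J) (M × J) ℂ,
      hsNormSq (extractorOutput U X) - hsNormSq (uniformOutput D X) ≤
        c / (Fintype.card M * Fintype.card D) * hsNormSq X) :
    (Fintype.card J : ℝ) * (Fintype.card M - 1) ≤ c * Fintype.card D := by
  obtain ⟨i₀⟩ := ‹Nonempty D›
  obtain ⟨s⟩ := ‹Nonempty M›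
  set X := (U i₀)ᴴ * flatProjector (J := J) s * U i₀
  have hX : hsNormSq X = Fintype.card J := by
    rw [hsNormSq_unitary_conj (hU i₀), hsNormSq_flatProjector]
  have htrace : X.trace = Fintype.card J := by
    have hUU : U i₀ * (U i₀)ᴴ = 1 := Unitary.mul_star_self_of_mem (hU i₀)
    rw [trace_mul_mul_of_mul_eq_one hUU, trace_flatProjector]
  have hspecX := hspec X
  rw [hsNormSq_uniformOutput, hX, htrace, Complex.normSq_natCast] at hspecX
  have hm : (0 : ℝ) < Fintype.card M := Nat.cast_pos.mpr Fintype.card_pos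
  have hj : (0 : ℝ) < Fintype.card J := Nat.cast_pos.mpr Fintype.card_pos
  have hd : (0 : ℝ) < Fintype.card D := Nat.cast_pos.mpr Fintype.card_pos
  have key := (hsNormSq_extractorOutput_conj_flatProjector_ge hU i₀ s).trans
    (sub_le_iff_le_add.mp hspecX)
  -- the left side exceeds the `τ` term by `j² (m - 1) / (m d²)`
  field_simp at key
  nlinarith

theorem logb_sub_le_logb_of_le_rpow_mul {b x y k : ℝ} (hb : 1 < b) (hx : 0 < x)
    (h : x ≤ b ^ k * y) : Real.logb b x - k ≤ Real.logb b y := by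
  have hbk : 0 < b ^ k := Real.rpow_pos_of_pos (by linarith) k
  have hy : 0 < y := pos_of_mul_pos_right (hx.trans_le h) hbk.le
  have := Real.logb_le_logb_of_le hb hx h
  rw [Real.logb_mul hbk.ne' hy.ne', Real.logb_rpow (by linarith) hb.ne'] at this
  linarith

theorem quantum_spectral_extractor_long_seed_general
    {M J D : Type} [Fintype M] [DecidableEq M] [Fintype J] [DecidableEq J]
    [Fintype D] [DecidableEq D] [Nonempty J] [Nonempty D]
    (hM : 1 < Fintype.card M)
    (U : D → Matrix (M × J) (M × J) ℂ) (hU : ∀ i, U i ∈ Matrix.unitaryGroup (M × J) ℂ)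
    (k ε : ℝ)
    -- spectral condition λ_max(ψ†∘ψ − τ†∘τ) ≤ 2^k ε/(|M||D|)
    (hspec : ∀ X : Matrix (M × J) (M × J) ℂ,
      hsNormSq (Matrix.of fun (mi : M × D) (mi' : M × D) =>
          if mi.2 = mi'.2 then
            ((Fintype.card D : ℂ))⁻¹ * ∑ t : J, (U mi.2 * X * (U mi.2)ᴴ) (mi.1, t) (mi'.1, t)
          else 0)
      - hsNormSq (Matrix.of fun (mi : M × D) (mi' : M × D) =>
          if mi = mi' then X.trace / ((Fintype.card M : ℂ) * (Fintype.card D : ℂ)) else 0)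
      ≤ 2 ^ k * ε / (Fintype.card M * Fintype.card D) * hsNormSq X) :
    Real.logb 2 (Fintype.card D) ≥
      min (Real.logb 2 (Fintype.card (M × J)) - k) (Real.logb 2 (Fintype.card M))
        + Real.logb 2 (1 / ε) - 2 := by
  have : Nonempty M := Fintype.card_pos_iff.mp (by omega)
  have hseed := card_mul_card_sub_one_le_of_spectral_bound hU hspec
  have hm : (2 : ℝ) ≤ Fintype.card M := by exact_mod_cast hM
  have hj : (1 : ℝ) ≤ Fintype.card J := by exact_mod_cast Fintype.card_pos
  have hd : (0 : ℝ) < Fintype.card D := by exact_mod_cast Fintype.card_pos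
  have hε : 0 < ε := by
    have : 0 < 2 ^ k * ε * Fintype.card D := by nlinarith
    exact pos_of_mul_pos_right (pos_of_mul_pos_left this hd.le) (by positivity)
  have hN : (Fintype.card (M × J) : ℝ) ≤ 2 ^ (k + 1) * (ε * Fintype.card D) := by
    rw [Real.rpow_add_one two_ne_zero, Fintype.card_prod, Nat.cast_mul]
    nlinarith
  have hlog := logb_sub_le_logb_of_le_rpow_mul one_lt_two (by positivity) hN
  rw [Real.logb_mul hε.ne' hd.ne'] at hlog
  rw [one_div, Real.logb_inv]
  linarith [min_le_left (Real.logb 2 (Fintype.card (M × J)) - k) (Real.logb 2 (Fintype.card M))]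

/-- every (k,ε)-quantum spectral extractor with input size `n = log|N|`,
output size `m = log|M|` and seed size `d = log|D|` satisfies
`d ≥ min{n−k, m} + log(1/ε) − 2`.  The edge case `k ≥ n−1`, handled in the paper by the
general `d ≥ log(1/ε)` bound, is assumed as the hypothesis `hedge`. -/
theorem quantum_spectral_extractor_long_seed
    {M J D : Type} [Fintype M] [DecidableEq M] [Fintype J] [DecidableEq J]
    [Fintype D] [DecidableEq D] [Nonempty M] [Nonempty J] [Nonempty D]
    (hM : 1 < Fintype.card M)
    (U : D → Matrix (M × J) (M × J) ℂ) (hU : ∀ i, U i ∈ Matrix.unitaryGroup (M × J) ℂ)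
    (k ε : ℝ) (hε : 0 < ε)
    (hk0 : -Real.logb 2 (Fintype.card (M × J)) ≤ k)
    (hkn : k ≤ Real.logb 2 (Fintype.card (M × J)))
    -- spectral condition λ_max(ψ†∘ψ − τ†∘τ) ≤ 2^k ε/(|M||D|)
    (hspec : ∀ X : Matrix (M × J) (M × J) ℂ,
      hsNormSq (Matrix.of fun (mi : M × D) (mi' : M × D) =>
          if mi.2 = mi'.2 then
            ((Fintype.card D : ℂ))⁻¹ * ∑ t : J, (U mi.2 * X * (U mi.2)ᴴ) (mi.1, t) (mi'.1, t)
          else 0)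
      - hsNormSq (Matrix.of fun (mi : M × D) (mi' : M × D) =>
          if mi = mi' then X.trace / ((Fintype.card M : ℂ) * (Fintype.card D : ℂ)) else 0)
      ≤ 2 ^ k * ε / (Fintype.card M * Fintype.card D) * hsNormSq X)
    -- edge case k ≥ n − 1: covered by the general d ≥ log(1/ε) lower bound
    (hedge : Real.logb 2 (Fintype.card (M × J)) - 1 ≤ k →
      Real.logb 2 (Fintype.card D) ≥
        min (Real.logb 2 (Fintype.card (M × J)) - k) (Real.logb 2 (Fintype.card M))
          + Real.logb 2 (1 / ε) - 2) :
    Real.logb 2 (Fintype.card D) ≥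
      min (Real.logb 2 (Fintype.card (M × J)) - k) (Real.logb 2 (Fintype.card M))
        + Real.logb 2 (1 / ε) - 2 :=
  quantum_spectral_extractor_long_seed_general hM U hU k ε hspec
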